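/- Let T be a bounded linear operator on a complex Hilbert space H, let M be a closed T-invariant subspace, and write T as the upper triangular operator matrix with diagonal (A₁, A₂) relative to H = M ⊕ M^⊥, where A₁ = T|_M and A₂ is the compression of T to M^⊥. If σ_w(A₁) ⊆ σ_w(T), then σ(T) = σ(A₁) ∪ σ(A₂). -/

import Mathlib

open Metric Filter NormedSpace
open scoped Classical ENNReal

variable {X : Type*} [NormedAddCommGroup X] [NormedSpace ℂ X]

/-- The restriction of `T` to an invariant subspace `M`, as an operator on `M`. -/
def restrictCLM (T : X →L[ℂ] X) (M : Submodule ℂ X) (hM : ∀ x ∈ M, T x ∈ M) :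
    M →L[ℂ] M :=
  { toLinearMap := (T : X →ₗ[ℂ] X).restrict hM
    cont := Continuous.subtype_mk (T.continuous.comp continuous_subtype_val) _ }

/-- `T` is Fredholm: closed range, finite-dimensional kernel and cokernel. -/
def IsFredholm (T : X →L[ℂ] X) : Prop :=
  IsClosed (LinearMap.range (T : X →ₗ[ℂ] X) : Set X) ∧
    FiniteDimensional ℂ (LinearMap.ker (T : X →ₗ[ℂ] X)) ∧ FiniteDimensional ℂ (X ⧸ LinearMap.range (T : X →ₗ[ℂ] X))

/-- `T` is Weyl: Fredholm of index zero. -/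
def IsWeyl (T : X →L[ℂ] X) : Prop :=
  IsFredholm T ∧
    Module.finrank ℂ (LinearMap.ker (T : X →ₗ[ℂ] X)) = Module.finrank ℂ (X ⧸ LinearMap.range (T : X →ₗ[ℂ] X))

/-- The Weyl spectrum `σ_w(T) = {lam ∈ σ(T) : T - lam is not Fredholm of index 0}`. -/
def weylSpectrum (T : X →L[ℂ] X) : Set ℂ :=
  {lam : ℂ | lam ∈ spectrum ℂ T ∧ ¬ IsWeyl (T - lam • 1)}

/-- The compression of `T` to the orthogonal complement `Mᗮ` of a closed subspace `M`
of a Hilbert space: `A₂ = P_{Mᗮ} T |_{Mᗮ}`, the second diagonal entry of the upper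
triangular operator matrix of `T` relative to `H = M ⊕ Mᗮ`. -/
noncomputable def compressionPerp {H : Type*} [NormedAddCommGroup H]
    [InnerProductSpace ℂ H] [CompleteSpace H] (T : H →L[ℂ] H) (M : Submodule ℂ H)
    (hM : IsClosed (M : Set H)) : Mᗮ →L[ℂ] Mᗮ :=
  haveI : CompleteSpace M := hM.completeSpace_coe
  (Submodule.orthogonalProjectionOnto Mᗮ).comp (T.comp Mᗮ.subtypeL)

/-!
Put `S = T - λ`. Relative to `H = M ⊕ Mᗮ`, `S` is upper triangular with diagonal entries
`S₁ = A₁ - λ` and `S₂ = A₂ - λ`, and the projection `P` onto `Mᗮ` intertwines `S` with `S₂`: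
`P S = S₂ P`. By back substitution `S` is invertible once `S₁` and `S₂` are. Conversely, if `S`
is invertible then `S₁` is injective and `S₂` is surjective. Since `λ ∉ σ_w(T) ⊇ σ_w(A₁)`, `S₁`
is invertible or Fredholm of index zero, and an injective operator of index zero is onto.
Surjectivity of `S₁` in turn makes `S₂` injective.
-/

open Function Submodule

lemma notMem_spectrum_iff_bijective [CompleteSpace X] (T : X →L[ℂ] X) (lam : ℂ) :
    lam ∉ spectrum ℂ T ↔ Bijective (T - lam • (1 : X →L[ℂ] X)) := by
  rw [spectrum.notMem_iff, Algebra.algebraMap_eq_smul_one, ← neg_sub, IsUnit.neg_iff,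
    ContinuousLinearMap.isUnit_iff_bijective]

lemma IsWeyl.surjective_of_injective {S : X →L[ℂ] X} (hS : IsWeyl S) (hinj : Injective S) :
    Surjective S := by
  obtain ⟨⟨-, -, hcoker⟩, hindex⟩ := hS
  rw [LinearMap.ker_eq_bot.mpr hinj, finrank_bot, eq_comm, Module.finrank_zero_iff,
    Submodule.Quotient.subsingleton_iff, LinearMap.range_eq_top] at hindex
  exact hindex

lemma bijective_sub_smul_one_of_notMem_weylSpectrum [CompleteSpace X] {A : X →L[ℂ] X} {lam : ℂ}
    (hlam : lam ∉ weylSpectrum A) (hinj : Injective (A - lam • (1 : X →L[ℂ] X))) :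
    Bijective (A - lam • (1 : X →L[ℂ] X)) := by
  by_cases hspec : lam ∈ spectrum ℂ A
  · have hweyl : IsWeyl (A - lam • 1) := by_contra fun h => hlam ⟨hspec, h⟩
    exact ⟨hinj, hweyl.surjective_of_injective hinj⟩
  · exact (notMem_spectrum_iff_bijective A lam).mp hspec

lemma restrictCLM_sub_smul_one {T : X →L[ℂ] X} {M : Submodule ℂ X} (hT : ∀ x ∈ M, T x ∈ M)
    (lam : ℂ) (hS : ∀ x ∈ M, (T - lam • (1 : X →L[ℂ] X)) x ∈ M) :
    restrictCLM T M hT - lam • 1 = restrictCLM (T - lam • 1) M hS :=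
  rfl

@[simp]
lemma coe_restrictCLM_apply {T : X →L[ℂ] X} {M : Submodule ℂ X} (hT : ∀ x ∈ M, T x ∈ M) (x : M) :
    (restrictCLM T M hT x : X) = T x :=
  rfl

lemma injective_restrictCLM {T : X →L[ℂ] X} {M : Submodule ℂ X} (hT : ∀ x ∈ M, T x ∈ M)
    (hinj : Injective T) : Injective (restrictCLM T M hT) :=
  fun _ _ h => Subtype.ext (hinj (congrArg Subtype.val h))

section Compression

variable {H : Type*} [NormedAddCommGroup H] [InnerProductSpace ℂ H] [CompleteSpace H]
  {M : Submodule ℂ H} (hMc : IsClosed (M : Set H))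

lemma compressionPerp_sub_smul_one (T : H →L[ℂ] H) (lam : ℂ) :
    compressionPerp T M hMc - lam • 1 = compressionPerp (T - lam • 1) M hMc := by
  ext p
  simp [compressionPerp, orthogonalProjectionOnto_mem_subspace_eq_self]

lemma orthogonalProjectionOnto_orthogonal_eq_zero_iff {x : H} :
    Mᗮ.orthogonalProjectionOnto x = 0 ↔ x ∈ M := by
  have : CompleteSpace M := hMc.completeSpace_coe
  rw [orthogonalProjectionOnto_eq_zero_iff, orthogonal_orthogonal]

variable {S : H →L[ℂ] H} (hMi : ∀ x ∈ M, S x ∈ M)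

-- The off-diagonal part of `S` maps into `M`, which the projection onto `Mᗮ` kills.
include hMi in
lemma compressionPerp_orthogonalProjectionOnto (x : H) :
    compressionPerp S M hMc (Mᗮ.orthogonalProjectionOnto x) =
      Mᗮ.orthogonalProjectionOnto (S x) := by
  have hxM : x - Mᗮ.starProjection x ∈ M := by
    rw [← orthogonalProjectionOnto_orthogonal_eq_zero_iff hMc, map_sub,
      starProjection_apply, orthogonalProjectionOnto_mem_subspace_eq_self, sub_self]
  have hSM := (orthogonalProjectionOnto_orthogonal_eq_zero_iff hMc).mpr (hMi _ hxM)
  rw [map_sub, map_sub, sub_eq_zero] at hSM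
  exact hSM.symm

include hMi in
lemma injective_of_injective_restrictCLM_compressionPerp (h₁ : Injective (restrictCLM S M hMi))
    (h₂ : Injective (compressionPerp S M hMc)) : Injective S := by
  refine (injective_iff_map_eq_zero S).mpr fun z hz => ?_
  have hPz : Mᗮ.orthogonalProjectionOnto z = 0 := h₂ <| by
    rw [compressionPerp_orthogonalProjectionOnto hMc hMi, hz, map_zero, map_zero]
  have hzM : z ∈ M := (orthogonalProjectionOnto_orthogonal_eq_zero_iff hMc).mp hPz
  have hz₁ : restrictCLM S M hMi ⟨z, hzM⟩ = restrictCLM S M hMi 0 :=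
    Subtype.ext (by simp [hz])
  exact congrArg Subtype.val (h₁ hz₁)

lemma surjective_of_surjective_restrictCLM_compressionPerp
    (h₁ : Surjective (restrictCLM S M hMi)) (h₂ : Surjective (compressionPerp S M hMc)) :
    Surjective S := by
  intro y
  obtain ⟨p, hp⟩ := h₂ (Mᗮ.orthogonalProjectionOnto y)
  have hyM : y - S p ∈ M := by
    rw [← orthogonalProjectionOnto_orthogonal_eq_zero_iff hMc, map_sub,
      ← compressionPerp_orthogonalProjectionOnto hMc hMi,
      orthogonalProjectionOnto_mem_subspace_eq_self, hp, sub_self]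
  obtain ⟨m, hm⟩ := h₁ ⟨y - S p, hyM⟩
  refine ⟨m + p, ?_⟩
  rw [map_add, ← coe_restrictCLM_apply hMi, hm, sub_add_cancel]

lemma injective_compressionPerp (hS : Injective S) (h₁ : Surjective (restrictCLM S M hMi)) :
    Injective (compressionPerp S M hMc) := by
  refine (injective_iff_map_eq_zero _).mpr fun p hp => ?_
  have hSp : S p ∈ M := by
    rw [← orthogonalProjectionOnto_orthogonal_eq_zero_iff hMc,
      ← compressionPerp_orthogonalProjectionOnto hMc hMi,
      orthogonalProjectionOnto_mem_subspace_eq_self, hp]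
  obtain ⟨m, hm⟩ := h₁ ⟨S p, hSp⟩
  have hpm : (m : H) = p := hS (by rw [← coe_restrictCLM_apply hMi, hm])
  exact Subtype.ext (disjoint_def.mp M.orthogonal_disjoint _ (hpm ▸ m.2) p.2)

include hMi in
lemma surjective_compressionPerp (hS : Surjective S) :
    Surjective (compressionPerp S M hMc) := by
  intro y
  obtain ⟨x, hx⟩ := hS y
  refine ⟨Mᗮ.orthogonalProjectionOnto x, ?_⟩
  rw [compressionPerp_orthogonalProjectionOnto hMc hMi, hx,
    orthogonalProjectionOnto_mem_subspace_eq_self]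

end Compression

/-- Let `T` be an operator on a complex Hilbert space, `M` a closed `T`-invariant
subspace, and let `(A₁, A₂)` be the diagonal of the upper triangular operator matrix
of `T` relative to `H = M ⊕ Mᗮ` (`A₁ = T|_M`, `A₂` the compression of `T` to `Mᗮ`).
If `σ_w(A₁) ⊆ σ_w(T)` then `σ(T) = σ(A₁) ∪ σ(A₂)`. -/
theorem spectrum_eq_union_of_weyl_restrict_subset
    {H : Type*} [NormedAddCommGroup H] [InnerProductSpace ℂ H] [CompleteSpace H]
    (T : H →L[ℂ] H) (M : Submodule ℂ H) (hMc : IsClosed (M : Set H))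
    (hMi : ∀ x ∈ M, T x ∈ M)
    (hw : weylSpectrum (restrictCLM T M hMi) ⊆ weylSpectrum T) :
    spectrum ℂ T =
      spectrum ℂ (restrictCLM T M hMi) ∪ spectrum ℂ (compressionPerp T M hMc) := by
  ext lam
  have hSi : ∀ x ∈ M, (T - lam • (1 : H →L[ℂ] H)) x ∈ M :=
    fun x hx => M.sub_mem (hMi x hx) (M.smul_mem lam hx)
  rw [Set.mem_union, ← not_iff_not, not_or, notMem_spectrum_iff_bijective,
    notMem_spectrum_iff_bijective, notMem_spectrum_iff_bijective,
    restrictCLM_sub_smul_one hMi lam hSi, compressionPerp_sub_smul_one]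
  constructor
  · intro hS
    have hlam : lam ∉ weylSpectrum T := fun h => (notMem_spectrum_iff_bijective T lam).mpr hS h.1
    have h₁ : Bijective (restrictCLM (T - lam • 1) M hSi) :=
      bijective_sub_smul_one_of_notMem_weylSpectrum (fun h => hlam (hw h))
        (injective_restrictCLM hSi hS.1)
    exact ⟨h₁, injective_compressionPerp hMc hSi hS.1 h₁.2, surjective_compressionPerp hMc hSi hS.2⟩
  · rintro ⟨h₁, h₂⟩
    exact ⟨injective_of_injective_restrictCLM_compressionPerp hMc hSi h₁.1 h₂.1,
      surjective_of_surjective_restrictCLM_compressionPerp hMc hSi h₁.2 h₂.2⟩
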